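/- arXiv:2301.11216 — 3 statements merged into one kernel-verified Lean document; each statement's English description precedes it below -/
import Mathlib

section
/- Let ρ, Z, ρⁿ, Zⁿ ≥ 0 be measurable functions with (ρⁿ, Zⁿ) and (ρ, Z) valued in the closed cone O̅_a = {(ρ,Z) : ρ ≥ 0, aρ ≤ Z ≤ āρ} for some 0 < a < ā. Define sⁿ = Zⁿ/ρⁿ and s = Z/ρ (set to 0 where the denominator vanishes). If ∫_B |Zⁿ − (ρⁿ+Zⁿ) Z/(ρ+Z)| → 0 and ∫_B |ρⁿ − (ρⁿ+Zⁿ) ρ/(ρ+Z)| → 0 as n → ∞ (with the convention 0/0 = 0), then ∫_B ρⁿ |sⁿ − s| → 0 as n → ∞. -/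
open MeasureTheory Filter

/-- Under the comparability condition `aρ ≤ Z ≤ āρ` (valid for `(ρⁿ,Zⁿ)` and `(ρ,Z)`),
if `∫ |Zⁿ − (ρⁿ+Zⁿ)Z/(ρ+Z)| → 0` and `∫ |ρⁿ − (ρⁿ+Zⁿ)ρ/(ρ+Z)| → 0`, then
`∫ ρⁿ |sⁿ − s| → 0` where `sⁿ = Zⁿ/ρⁿ` and `s = Z/ρ` (with the convention `0/0 = 0`,
which is the Lean convention for division). -/
theorem stmt8 {B : Type*} [MeasurableSpace B] (μ : Measure B) [IsFiniteMeasure μ]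
    (aL aU : ℝ) (haL : 0 < aL) (haU : aL < aU)
    (ρn Zn : ℕ → B → ℝ) (ρ Z : B → ℝ)
    (hconen : ∀ n x, 0 ≤ ρn n x ∧ aL * ρn n x ≤ Zn n x ∧ Zn n x ≤ aU * ρn n x)
    (hcone : ∀ x, 0 ≤ ρ x ∧ aL * ρ x ≤ Z x ∧ Z x ≤ aU * ρ x)
    (hint : ∀ n, Integrable (ρn n) μ ∧ Integrable (Zn n) μ)
    (hintl : Integrable ρ μ ∧ Integrable Z μ)
    (h1 : Tendsto (fun n => ∫ x, |Zn n x - (ρn n x + Zn n x) * (Z x / (ρ x + Z x))| ∂μ)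
      atTop (nhds 0))
    (h2 : Tendsto (fun n => ∫ x, |ρn n x - (ρn n x + Zn n x) * (ρ x / (ρ x + Z x))| ∂μ)
      atTop (nhds 0)) :
    Tendsto (fun n => ∫ x, ρn n x * |Zn n x / ρn n x - Z x / ρ x| ∂μ) atTop (nhds 0) := by
  have haU0 : (0:ℝ) < aU := haL.trans haU
  -- abbreviations
  set A : ℕ → B → ℝ := fun n x => Zn n x - (ρn n x + Zn n x) * (Z x / (ρ x + Z x)) with hA
  set Bf : ℕ → B → ℝ := fun n x => ρn n x - (ρn n x + Zn n x) * (ρ x / (ρ x + Z x)) with hB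
  have hZ0 : ∀ x, 0 ≤ Z x := fun x =>
    le_trans (mul_nonneg haL.le (hcone x).1) (hcone x).2.1
  have hZn0 : ∀ n x, 0 ≤ Zn n x := fun n x =>
    le_trans (mul_nonneg haL.le (hconen n x).1) (hconen n x).2.1
  -- pointwise key inequality
  have key : ∀ n x, ρn n x * |Zn n x / ρn n x - Z x / ρ x| ≤ |A n x| + aU * |Bf n x| := by
    intro n x
    obtain ⟨hρn0, hZn1, hZn2⟩ := hconen n x
    obtain ⟨hρ0, hZ1, hZ2⟩ := hcone x
    have hs0 : 0 ≤ Z x / ρ x := div_nonneg (hZ0 x) hρ0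
    have hsU : Z x / ρ x ≤ aU := by
      rcases eq_or_lt_of_le hρ0 with h | h
      · simp [← h, haU0.le]
      · rw [div_le_iff₀ h]; linarith
    have step1 : ρn n x * |Zn n x / ρn n x - Z x / ρ x| = |Zn n x - ρn n x * (Z x / ρ x)| := by
      rcases eq_or_lt_of_le hρn0 with h | h
      · have h1 : Zn n x = 0 := le_antisymm (by rw [← h] at hZn2; linarith) (hZn0 n x)
        simp [← h, h1]
      · have he : ρn n x * (Zn n x / ρn n x) = Zn n x := by
          rw [mul_comm]; exact div_mul_cancel₀ _ (ne_of_gt h)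
        rw [show Zn n x - ρn n x * (Z x / ρ x)
            = ρn n x * (Zn n x / ρn n x - Z x / ρ x) by rw [mul_sub, he],
          abs_mul, abs_of_pos h]
    have step2 : Zn n x - ρn n x * (Z x / ρ x) = A n x - Bf n x * (Z x / ρ x) := by
      rcases eq_or_lt_of_le hρ0 with h | h
      · have h1 : Z x = 0 := le_antisymm (by rw [← h] at hZ2; linarith) (hZ0 x)
        simp [hA, hB, ← h, h1]
      · have hρZ : 0 < ρ x + Z x := by linarith [hZ0 x]
        simp only [hA, hB]
        field_simp
        ring
    calc ρn n x * |Zn n x / ρn n x - Z x / ρ x|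
        = |A n x - Bf n x * (Z x / ρ x)| := by rw [step1, step2]
      _ ≤ |A n x| + |Bf n x * (Z x / ρ x)| := abs_sub _ _
      _ = |A n x| + |Bf n x| * |Z x / ρ x| := by rw [abs_mul]
      _ ≤ |A n x| + aU * |Bf n x| := by
          have : |Z x / ρ x| ≤ aU := by rw [abs_of_nonneg hs0]; exact hsU
          nlinarith [abs_nonneg (Bf n x)]
  -- measurability
  have hρm : AEMeasurable ρ μ := hintl.1.aemeasurable
  have hZm : AEMeasurable Z μ := hintl.2.aemeasurable
  have hρnm : ∀ n, AEMeasurable (ρn n) μ := fun n => (hint n).1.aemeasurable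
  have hZnm : ∀ n, AEMeasurable (Zn n) μ := fun n => (hint n).2.aemeasurable
  -- bounds on the weights
  have hw1 : ∀ x, 0 ≤ Z x / (ρ x + Z x) ∧ Z x / (ρ x + Z x) ≤ 1 := fun x =>
    ⟨div_nonneg (hZ0 x) (by linarith [(hcone x).1, hZ0 x]),
      div_le_one_of_le₀ (by linarith [(hcone x).1]) (by linarith [(hcone x).1, hZ0 x])⟩
  have hw2 : ∀ x, 0 ≤ ρ x / (ρ x + Z x) ∧ ρ x / (ρ x + Z x) ≤ 1 := fun x =>
    ⟨div_nonneg (hcone x).1 (by linarith [(hcone x).1, hZ0 x]),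
      div_le_one_of_le₀ (by linarith [hZ0 x]) (by linarith [(hcone x).1, hZ0 x])⟩
  -- integrability of A and Bf
  have hAint : ∀ n, Integrable (A n) μ := by
    intro n
    refine Integrable.mono ((hint n).2.abs.add ((hint n).1.add (hint n).2))
      ((hZnm n).sub (((hρnm n).add (hZnm n)).mul (hZm.div (hρm.add hZm)))).aestronglyMeasurable
      (Filter.Eventually.of_forall fun x => ?_)
    have h1 := hw1 x
    have h2 := hZn0 n x
    have h3 := (hconen n x).1
    simp only [Real.norm_eq_abs, hA]
    have : |Zn n x - (ρn n x + Zn n x) * (Z x / (ρ x + Z x))|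
        ≤ |Zn n x| + (ρn n x + Zn n x) := by
      refine le_trans (abs_sub _ _) ?_
      have : |(ρn n x + Zn n x) * (Z x / (ρ x + Z x))| ≤ ρn n x + Zn n x := by
        rw [abs_mul, abs_of_nonneg (by linarith), abs_of_nonneg h1.1]
        nlinarith
      linarith
    refine le_trans this (le_abs_self _)
  have hBint : ∀ n, Integrable (Bf n) μ := by
    intro n
    refine Integrable.mono ((hint n).1.abs.add ((hint n).1.add (hint n).2))
      ((hρnm n).sub (((hρnm n).add (hZnm n)).mul (hρm.div (hρm.add hZm)))).aestronglyMeasurable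
      (Filter.Eventually.of_forall fun x => ?_)
    have h1 := hw2 x
    have h2 := hZn0 n x
    have h3 := (hconen n x).1
    simp only [Real.norm_eq_abs, hB]
    have : |ρn n x - (ρn n x + Zn n x) * (ρ x / (ρ x + Z x))|
        ≤ |ρn n x| + (ρn n x + Zn n x) := by
      refine le_trans (abs_sub _ _) ?_
      have : |(ρn n x + Zn n x) * (ρ x / (ρ x + Z x))| ≤ ρn n x + Zn n x := by
        rw [abs_mul, abs_of_nonneg (by linarith), abs_of_nonneg h1.1]
        nlinarith
      linarith
    refine le_trans this (le_abs_self _)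
  -- integrability of the main integrand
  have hfint : ∀ n, Integrable (fun x => ρn n x * |Zn n x / ρn n x - Z x / ρ x|) μ := by
    intro n
    refine Integrable.mono ((hint n).2.abs.add ((hint n).1.const_mul aU))
      ((hρnm n).mul (measurable_abs.comp_aemeasurable
        (((hZnm n).div (hρnm n)).sub (hZm.div hρm)))).aestronglyMeasurable
      (Filter.Eventually.of_forall fun x => ?_)
    simp only [Real.norm_eq_abs]
    have h3 := (hconen n x).1
    have hnn : 0 ≤ ρn n x * |Zn n x / ρn n x - Z x / ρ x| := mul_nonneg h3 (abs_nonneg _)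
    rw [abs_of_nonneg hnn]
    refine le_trans ?_ (le_abs_self _)
    -- ρn |sⁿ − s| ≤ |Zn| + aU * ρn : bound |sⁿ − s| ≤ |sⁿ| + |s| etc
    have hb : |Zn n x / ρn n x - Z x / ρ x| ≤ |Zn n x / ρn n x| + |Z x / ρ x| := abs_sub _ _
    have hsU : |Z x / ρ x| ≤ aU := by
      obtain ⟨hρ0, hZ1, hZ2⟩ := hcone x
      rw [abs_of_nonneg (div_nonneg (hZ0 x) hρ0)]
      rcases eq_or_lt_of_le hρ0 with h | h
      · simp [← h, haU0.le]
      · rw [div_le_iff₀ h]; linarith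
    have hρsn : ρn n x * |Zn n x / ρn n x| = |Zn n x| := by
      rcases eq_or_lt_of_le h3 with h | h
      · have h1 : Zn n x = 0 := le_antisymm (by have := (hconen n x).2.2; rw [← h] at this; linarith) (hZn0 n x)
        simp [← h, h1]
      · rw [abs_div, abs_of_pos h, mul_comm, div_mul_cancel₀ _ (ne_of_gt h)]
    calc ρn n x * |Zn n x / ρn n x - Z x / ρ x|
        ≤ ρn n x * (|Zn n x / ρn n x| + |Z x / ρ x|) := by
          exact mul_le_mul_of_nonneg_left hb h3
      _ = |Zn n x| + ρn n x * |Z x / ρ x| := by rw [mul_add, hρsn]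
      _ ≤ |Zn n x| + aU * ρn n x := by nlinarith [abs_nonneg (Z x / ρ x)]
  -- squeeze
  have hmono : ∀ n, ∫ x, ρn n x * |Zn n x / ρn n x - Z x / ρ x| ∂μ
      ≤ (∫ x, |A n x| ∂μ) + aU * ∫ x, |Bf n x| ∂μ := by
    intro n
    have h1 : ∫ x, ρn n x * |Zn n x / ρn n x - Z x / ρ x| ∂μ
        ≤ ∫ x, |A n x| + aU * |Bf n x| ∂μ :=
      integral_mono (hfint n) ((hAint n).abs.add ((hBint n).abs.const_mul aU)) (key n)
    rw [integral_add (hAint n).abs ((hBint n).abs.const_mul aU), integral_const_mul] at h1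
    exact h1
  have hlim : Tendsto (fun n => (∫ x, |A n x| ∂μ) + aU * ∫ x, |Bf n x| ∂μ) atTop (nhds 0) := by
    have := h1.add (h2.const_mul aU)
    simpa using this
  refine squeeze_zero (fun n => integral_nonneg fun x => mul_nonneg (hconen n x).1 (abs_nonneg _))
    hmono hlim
end

section
/- Suppose a real sequence of measurable functions satisfies: bⁿ₀ → b₀ in L^γ(Ω), the renormalized mass identities ∫ (bⁿ)²/dⁿ (t) = ∫ (bⁿ₀)²/dⁿ₀, ∫ b²/d (t) = ∫ b₀²/d₀, lim_n ∫ (bⁿ₀)²/dⁿ₀ = ∫ b₀²/d₀, and the weak convergences ∫ bⁿ(t) a(t) → ∫ b(t) a(t), ∫ dⁿ(t) a(t)² → ∫ d(t) a(t)² where a = b/d. Then lim_n ∫ dⁿ(t) (aⁿ(t) − a(t))² = 0, where aⁿ = bⁿ/dⁿ. -/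
open MeasureTheory Filter

/-- If `bⁿ₀ → b₀` in `L^γ`, the renormalized mass identities
`∫ (bⁿ)²/dⁿ = ∫ (bⁿ₀)²/dⁿ₀`, `∫ b²/d = ∫ b₀²/d₀` hold with
`lim_n ∫ (bⁿ₀)²/dⁿ₀ = ∫ b₀²/d₀`, and the weak convergences
`∫ bⁿ a → ∫ b a`, `∫ dⁿ a² → ∫ d a²` hold for `a = b/d`,
then `∫ dⁿ (aⁿ − a)² → 0` where `aⁿ = bⁿ/dⁿ` (convention `0/0 = 0`). -/
theorem stmt11 {B : Type*} [MeasurableSpace B] (μ : Measure B)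
    (γ : ℝ) (hγ : 1 ≤ γ)
    (bn dn : ℕ → B → ℝ) (b d : B → ℝ)
    (bn0 dn0 : ℕ → B → ℝ) (b0 d0 : B → ℝ)
    (hbn : ∀ n x, 0 ≤ bn n x ∧ bn n x ≤ dn n x)
    (hb : ∀ x, 0 ≤ b x ∧ b x ≤ d x)
    (hL : Tendsto (fun n => ∫ x, |bn0 n x - b0 x| ^ γ ∂μ) atTop (nhds 0))
    (hmassn : ∀ n, ∫ x, (bn n x) ^ 2 / dn n x ∂μ = ∫ x, (bn0 n x) ^ 2 / dn0 n x ∂μ)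
    (hmass : ∫ x, (b x) ^ 2 / d x ∂μ = ∫ x, (b0 x) ^ 2 / d0 x ∂μ)
    (hinit : Tendsto (fun n => ∫ x, (bn0 n x) ^ 2 / dn0 n x ∂μ) atTop
      (nhds (∫ x, (b0 x) ^ 2 / d0 x ∂μ)))
    (hw1 : Tendsto (fun n => ∫ x, bn n x * (b x / d x) ∂μ) atTop
      (nhds (∫ x, b x * (b x / d x) ∂μ)))
    (hw2 : Tendsto (fun n => ∫ x, dn n x * (b x / d x) ^ 2 ∂μ) atTop
      (nhds (∫ x, d x * (b x / d x) ^ 2 ∂μ)))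
    (hint1 : ∀ n, Integrable (fun x => (bn n x) ^ 2 / dn n x) μ)
    (hint2 : ∀ n, Integrable (fun x => bn n x * (b x / d x)) μ)
    (hint3 : ∀ n, Integrable (fun x => dn n x * (b x / d x) ^ 2) μ) :
    Tendsto (fun n => ∫ x, dn n x * (bn n x / dn n x - b x / d x) ^ 2 ∂μ) atTop (nhds 0) := by

  have key : ∀ n, (fun x => dn n x * (bn n x / dn n x - b x / d x) ^ 2)
      = fun x => (bn n x) ^ 2 / dn n x - 2 * (bn n x * (b x / d x))
        + dn n x * (b x / d x) ^ 2 := by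
    intro n; funext x
    rcases eq_or_ne (dn n x) 0 with h | h
    · have hb0 : bn n x = 0 := le_antisymm (h ▸ (hbn n x).2) (hbn n x).1
      simp [h, hb0]
    · field_simp
      ring
  have hident : (∫ x, b x * (b x / d x) ∂μ) = ∫ x, (b x) ^ 2 / d x ∂μ := by
    congr 1; funext x
    rcases eq_or_ne (d x) 0 with h | h
    · have hb0 : b x = 0 := le_antisymm (h ▸ (hb x).2) (hb x).1
      simp [h, hb0]
    · field_simp
  have hident2 : (∫ x, d x * (b x / d x) ^ 2 ∂μ) = ∫ x, (b x) ^ 2 / d x ∂μ := by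
    congr 1; funext x
    rcases eq_or_ne (d x) 0 with h | h
    · have hb0 : b x = 0 := le_antisymm (h ▸ (hb x).2) (hb x).1
      simp [h, hb0]
    · field_simp
  have hsplit : ∀ n, (∫ x, dn n x * (bn n x / dn n x - b x / d x) ^ 2 ∂μ)
      = (∫ x, (bn n x) ^ 2 / dn n x ∂μ) - 2 * (∫ x, bn n x * (b x / d x) ∂μ)
        + ∫ x, dn n x * (b x / d x) ^ 2 ∂μ := by
    intro n
    have i12 : Integrable (fun x => (bn n x) ^ 2 / dn n x - 2 * (bn n x * (b x / d x))) μ :=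
      (hint1 n).sub ((hint2 n).const_mul 2)
    rw [key n, integral_add i12 (hint3 n),
      integral_sub (hint1 n) ((hint2 n).const_mul 2), MeasureTheory.integral_const_mul]
  have hA : Tendsto (fun n => ∫ x, (bn n x) ^ 2 / dn n x ∂μ) atTop
      (nhds (∫ x, (b x) ^ 2 / d x ∂μ)) := by
    simp only [hmassn, hmass]; exact hinit
  have := ((hA.sub ((hw1.const_mul 2))).add hw2)
  simp only [hsplit]
  convert this using 2
  rw [hident, hident2]; ring
end

section
/- Let H be a Hilbert space, Δt > 0, and (f^m)_{m∈ℕ} ⊂ H. Define the piecewise constant interpolant f^M(t) = f^m for t ∈ [(m−1)Δt, mΔt). Suppose for some q ∈ (0,1], c > 0 and integer k that ∫₀^{kΔt − s} ‖f^M(t+s) − f^M(t)‖²_H dt ≤ c s^q holds for all s = lΔt with l ∈ ℕ, l ≤ k. Then the same estimate ∫₀^{kΔt − s} ‖f^M(t+s) − f^M(t)‖²_H dt ≤ C s^q holds (with a possibly larger constant C depending only on c and q) for every real s with 0 < s < kΔt. -/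
open MeasureTheory Set

/-!
Since `f^M` is constant on the cells `[mΔt, (m+1)Δt)`, splitting each cell at the point where
`t + s` crosses a grid point shows that the translate integral
`I(s) = ∫₀^{kΔt−s} ‖f^M(t+s) − f^M(t)‖² dt` is affine in `s` between consecutive grid points:
`I((a+θ)Δt) = (1−θ) I(aΔt) + θ I((a+1)Δt)` for `θ ∈ [0,1]`. The bound `c s^q` is concave in `s`
for `q ≤ 1`, so it dominates this interpolation of its grid values, and `C = c` works.
-/

def HasIntervalIntegral (g : ℝ → ℝ) (α β v : ℝ) : Prop :=
  IntervalIntegrable g volume α β ∧ ∫ t in α..β, g t = v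

namespace HasIntervalIntegral

variable {g : ℝ → ℝ}

theorem of_eqOn_Ioo {α β c : ℝ} (hαβ : α ≤ β) (h : EqOn g (fun _ => c) (Ioo α β)) :
    HasIntervalIntegral g α β ((β - α) * c) := by
  refine ⟨(intervalIntegrable_congr_uIoo (by rwa [uIoo_of_le hαβ])).2 intervalIntegrable_const, ?_⟩
  rw [intervalIntegral.integral_congr_Ioo_of_le hαβ h, intervalIntegral.integral_const,
    smul_eq_mul]

theorem trans {α β γ v w : ℝ} (h₁ : HasIntervalIntegral g α β v)
    (h₂ : HasIntervalIntegral g β γ w) : HasIntervalIntegral g α γ (v + w) :=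
  ⟨h₁.1.trans h₂.1, by rw [← intervalIntegral.integral_add_adjacent_intervals h₁.1 h₂.1, h₁.2, h₂.2]⟩

theorem sum {a : ℕ → ℝ} {v : ℕ → ℝ} {n : ℕ}
    (h : ∀ m < n, HasIntervalIntegral g (a m) (a (m + 1)) (v m)) :
    HasIntervalIntegral g (a 0) (a n) (∑ m ∈ Finset.range n, v m) := by
  refine ⟨IntervalIntegrable.trans_iterate fun m hm => (h m hm).1, ?_⟩
  rw [← intervalIntegral.sum_integral_adjacent_intervals fun m hm => (h m hm).1]
  exact Finset.sum_congr rfl fun m hm => (h m (Finset.mem_range.1 hm)).2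

end HasIntervalIntegral

def IsStepInterpolant {H : Type*} (Δt : ℝ) (x : ℕ → H) (u : ℝ → H) : Prop :=
  ∀ (m : ℕ), ∀ t ∈ Ico ((m : ℝ) * Δt) ((m + 1) * Δt), u t = x m

section

variable {H : Type*} [SeminormedAddCommGroup H]

noncomputable def translateIntegral (u : ℝ → H) (T σ : ℝ) : ℝ :=
  ∫ t in Ioc 0 (T - σ), ‖u (t + σ) - u t‖ ^ 2

namespace IsStepInterpolant

variable {Δt : ℝ} {x : ℕ → H} {u : ℝ → H}

theorem hasIntervalIntegral_of_subset_cells (hu : IsStepInterpolant Δt x u) {α β σ : ℝ} {m n : ℕ}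
    (hαβ : α ≤ β) (hα : m * Δt ≤ α) (hβ : β ≤ (m + 1) * Δt) (hασ : n * Δt ≤ α + σ)
    (hβσ : β + σ ≤ (n + 1) * Δt) :
    HasIntervalIntegral (fun t => ‖u (t + σ) - u t‖ ^ 2) α β ((β - α) * ‖x n - x m‖ ^ 2) := by
  refine .of_eqOn_Ioo hαβ fun t ht => ?_
  dsimp only
  rw [hu n (t + σ) ⟨by linarith [ht.1], by linarith [ht.2]⟩,
    hu m t ⟨by linarith [ht.1], by linarith [ht.2]⟩]

variable {r : ℝ}

theorem hasIntervalIntegral_cell_left (hu : IsStepInterpolant Δt x u) (hΔ : 0 ≤ Δt)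
    (hr0 : 0 ≤ r) (hr1 : r ≤ 1) (a m : ℕ) :
    HasIntervalIntegral (fun t => ‖u (t + (a + r) * Δt) - u t‖ ^ 2) (m * Δt) ((m + 1 - r) * Δt)
      (Δt * ((1 - r) * ‖x (m + a) - x m‖ ^ 2)) := by
  convert hu.hasIntervalIntegral_of_subset_cells (σ := (a + r) * Δt) (m := m) (n := m + a)
    (α := m * Δt) (β := (m + 1 - r) * Δt) (by nlinarith) le_rfl (by nlinarith)
    (by push_cast; nlinarith) (by push_cast; nlinarith) using 1
  ring

theorem hasIntervalIntegral_cell (hu : IsStepInterpolant Δt x u) (hΔ : 0 ≤ Δt)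
    (hr0 : 0 ≤ r) (hr1 : r ≤ 1) (a m : ℕ) :
    HasIntervalIntegral (fun t => ‖u (t + (a + r) * Δt) - u t‖ ^ 2) (m * Δt) ((m + 1 : ℕ) * Δt)
      (Δt * ((1 - r) * ‖x (m + a) - x m‖ ^ 2 + r * ‖x (m + (a + 1)) - x m‖ ^ 2)) := by
  have right := hu.hasIntervalIntegral_of_subset_cells (σ := (a + r) * Δt) (m := m)
    (n := m + (a + 1)) (α := (m + 1 - r) * Δt) (by nlinarith) (by nlinarith) le_rfl
    (by push_cast; nlinarith) (by push_cast; nlinarith)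
  convert (hu.hasIntervalIntegral_cell_left hΔ hr0 hr1 a m).trans right using 1
  · push_cast; rfl
  · ring

theorem translateIntegral_eq_sum (hu : IsStepInterpolant Δt x u) (hΔ : 0 ≤ Δt)
    (hr0 : 0 ≤ r) (hr1 : r ≤ 1) (a N : ℕ) :
    translateIntegral u ((a + N + 1) * Δt) ((a + r) * Δt) =
      Δt * ((∑ m ∈ Finset.range N,
          ((1 - r) * ‖x (m + a) - x m‖ ^ 2 + r * ‖x (m + (a + 1)) - x m‖ ^ 2)) +
        (1 - r) * ‖x (N + a) - x N‖ ^ 2) := by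
  have cells := HasIntervalIntegral.sum (a := fun m : ℕ => (m : ℝ) * Δt) (n := N)
    fun m _ => hu.hasIntervalIntegral_cell hΔ hr0 hr1 a m
  have whole := cells.trans (hu.hasIntervalIntegral_cell_left hΔ hr0 hr1 a N)
  simp only [Nat.cast_zero, zero_mul] at whole
  rw [translateIntegral, ← intervalIntegral.integral_of_le (by nlinarith)]
  rw [show ((a : ℝ) + N + 1) * Δt - (a + r) * Δt = (N + 1 - r) * Δt by ring, whole.2,
    mul_add, Finset.mul_sum]

theorem translateIntegral_affine (hu : IsStepInterpolant Δt x u) (hΔ : 0 ≤ Δt)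
    (hr0 : 0 ≤ r) (hr1 : r ≤ 1) {a k : ℕ} (hak : a < k) :
    translateIntegral u (k * Δt) ((a + r) * Δt) =
      (1 - r) * translateIntegral u (k * Δt) (a * Δt) +
        r * translateIntegral u (k * Δt) ((a + 1) * Δt) := by
  obtain ⟨N, rfl⟩ := Nat.exists_eq_add_of_lt hak
  have grid := hu.translateIntegral_eq_sum hΔ le_rfl zero_le_one a N
  have next := hu.translateIntegral_eq_sum hΔ zero_le_one le_rfl a N
  rw [add_zero] at grid
  push_cast
  rw [hu.translateIntegral_eq_sum hΔ hr0 hr1, grid, next]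
  simp only [Finset.sum_add_distrib, ← Finset.mul_sum]
  ring

end IsStepInterpolant

end

theorem stmt14_general {H : Type*} [NormedAddCommGroup H]
    (q c : ℝ) (hq0 : 0 < q) (hq1 : q ≤ 1) (hc : 0 < c) :
    ∃ C : ℝ, 0 < C ∧
      ∀ (Δt : ℝ), 0 < Δt →
      ∀ (f : ℕ → H) (fM : ℝ → H),
        (∀ m : ℕ, 1 ≤ m →
          ∀ t ∈ Set.Ico (((m : ℝ) - 1) * Δt) ((m : ℝ) * Δt), fM t = f m) →
      ∀ k : ℕ,
        (∀ l : ℕ, 1 ≤ l → l ≤ k →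
          (∫ t in Set.Ioc 0 ((k : ℝ) * Δt - (l : ℝ) * Δt),
              ‖fM (t + (l : ℝ) * Δt) - fM t‖ ^ 2) ≤ c * ((l : ℝ) * Δt) ^ q) →
        ∀ s : ℝ, 0 < s → s < (k : ℝ) * Δt →
          (∫ t in Set.Ioc 0 ((k : ℝ) * Δt - s), ‖fM (t + s) - fM t‖ ^ 2) ≤ C * s ^ q := by
  refine ⟨c, hc, fun Δt hΔ f fM hfM k hI s hs hsk => ?_⟩
  have hu : IsStepInterpolant Δt (fun m => f (m + 1)) fM := fun m t ht =>
    hfM (m + 1) (by omega) t (by push_cast; simpa using ht)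
  have hgrid : ∀ l ≤ k, translateIntegral fM (k * Δt) (l * Δt) ≤ c * (l * Δt) ^ q := by
    intro l hlk
    rcases Nat.eq_zero_or_pos l with rfl | hl
    · simp [translateIntegral, Real.zero_rpow hq0.ne']
    · exact hI l hl hlk
  set a := ⌊s / Δt⌋₊
  set r := s / Δt - a
  have hr0 : 0 ≤ r := sub_nonneg.2 (Nat.floor_le (by positivity))
  have hr1 : r ≤ 1 := by linarith [Nat.lt_floor_add_one (s / Δt)]
  have hs_eq : s = (a + r) * Δt := by rw [add_sub_cancel, div_mul_cancel₀ _ hΔ.ne']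
  have hak : a < k := Nat.floor_lt (by positivity) |>.2 ((div_lt_iff₀ hΔ).2 hsk)
  have hnext := hgrid (a + 1) hak
  push_cast at hnext
  have hconc : (1 - r) * (a * Δt) ^ q + r * ((a + 1) * Δt) ^ q ≤ s ^ q := by
    have := (Real.concaveOn_rpow hq0.le hq1).2 (mem_Ici.2 (by positivity : (0 : ℝ) ≤ a * Δt))
      (mem_Ici.2 (by positivity : (0 : ℝ) ≤ (a + 1) * Δt)) (sub_nonneg.2 hr1) hr0 (sub_add_cancel 1 r)
    simp only [smul_eq_mul] at this
    refine this.trans_eq (congrArg (· ^ q) ?_)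
    rw [hs_eq]
    ring
  calc translateIntegral fM (k * Δt) s
      = (1 - r) * translateIntegral fM (k * Δt) (a * Δt) +
          r * translateIntegral fM (k * Δt) ((a + 1) * Δt) := by
        rw [hs_eq, hu.translateIntegral_affine hΔ.le hr0 hr1 hak]
    _ ≤ (1 - r) * (c * (a * Δt) ^ q) + r * (c * ((a + 1) * Δt) ^ q) :=
        add_le_add (mul_le_mul_of_nonneg_left (hgrid a hak.le) (sub_nonneg.2 hr1))
          (mul_le_mul_of_nonneg_left hnext hr0)
    _ = c * ((1 - r) * (a * Δt) ^ q + r * ((a + 1) * Δt) ^ q) := by ring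
    _ ≤ c * s ^ q := mul_le_mul_of_nonneg_left hconc hc.le

/-- If the piecewise constant interpolant `f^M` (with step `Δt`) satisfies
`∫₀^{kΔt−s} ‖f^M(t+s) − f^M(t)‖² dt ≤ c s^q` for all translation lengths `s = lΔt`,
`l ∈ ℕ`, `l ≤ k`, then the same estimate (with a larger constant depending only on
`c` and `q`) holds for every real `0 < s < kΔt`. -/
theorem stmt14 {H : Type*} [NormedAddCommGroup H] [InnerProductSpace ℝ H]
    (q c : ℝ) (hq0 : 0 < q) (hq1 : q ≤ 1) (hc : 0 < c) :
    ∃ C : ℝ, 0 < C ∧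
      ∀ (Δt : ℝ), 0 < Δt →
      ∀ (f : ℕ → H) (fM : ℝ → H),
        (∀ m : ℕ, 1 ≤ m →
          ∀ t ∈ Set.Ico (((m : ℝ) - 1) * Δt) ((m : ℝ) * Δt), fM t = f m) →
      ∀ k : ℕ,
        (∀ l : ℕ, 1 ≤ l → l ≤ k →
          (∫ t in Set.Ioc 0 ((k : ℝ) * Δt - (l : ℝ) * Δt),
              ‖fM (t + (l : ℝ) * Δt) - fM t‖ ^ 2) ≤ c * ((l : ℝ) * Δt) ^ q) →
        ∀ s : ℝ, 0 < s → s < (k : ℝ) * Δt →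
          (∫ t in Set.Ioc 0 ((k : ℝ) * Δt - s), ‖fM (t + s) - fM t‖ ^ 2) ≤ C * s ^ q :=
  stmt14_general q c hq0 hq1 hc
end
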